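/- arXiv:2303.01392 — 5 statements merged into one kernel-verified Lean document; each statement's English description precedes it below -/
import Mathlib

section
/- Suppose additionally that D(e) > 0 for every edge e. If (p_A, r_A, m_A) and (p_A', r_A', m_A') are both maximizers of player A's objective U_A over player A's feasible set, then p_A = p_A'; i.e., the optimal price vector of player A's best-response problem is unique for any fixed prices p_B of player B. -/
open scoped BigOperators

/-- Player A's served demand on edge `e` under the bilinear demand
`f(p,q) = (1/2)(1-p)(1+q)`, given demand rates `D`, competitor prices `pB`
and own prices `pA`. -/
noncomputable def servedDemand {N : Type*} (D pB pA : N × N → ℝ) (e : N × N) : ℝ :=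
  D e * ((1 - pA e) * (1 + pB e) / 2)

/-- Player A's feasible set: triples `(p_A, r_A, m_A)` of prices in `[0,1]`,
nonnegative rebalancing rates and nonnegative supplies, satisfying the per-node
supply constraint, the flow-balance constraint, and the total-fleet constraint. -/
def feasibleSet {N : Type*} [Fintype N] [DecidableEq N] (D pB : N × N → ℝ) (MA : ℝ) :
    Set ((N × N → ℝ) × (N × N → ℝ) × (N → ℝ)) :=
  {s | (∀ e, s.1 e ∈ Set.Icc (0:ℝ) 1) ∧ (∀ e, 0 ≤ s.2.1 e) ∧ (∀ i, 0 ≤ s.2.2 i) ∧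
    (∀ i, ∑ j, (servedDemand D pB s.1 (i, j) + s.2.1 (i, j)) ≤ s.2.2 i) ∧
    (∀ i, ∑ j ∈ Finset.univ.filter (· ≠ i),
            (servedDemand D pB s.1 (i, j) + s.2.1 (i, j)) =
          ∑ j ∈ Finset.univ.filter (· ≠ i),
            (servedDemand D pB s.1 (j, i) + s.2.1 (j, i))) ∧
    (∑ i, s.2.2 i = MA)}

/-- Player A's objective: revenue minus rebalancing costs minus parking costs. -/
noncomputable def objectiveA {N : Type*} [Fintype N] (D pB pc : N × N → ℝ) (pe : N → ℝ)
    (s : (N × N → ℝ) × (N × N → ℝ) × (N → ℝ)) : ℝ :=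
  ∑ e, (s.1 e - pc e) * servedDemand D pB s.1 e - ∑ e, pc e * s.2.1 e -
    ∑ i, pe i * (s.2.2 i - ∑ j, (servedDemand D pB s.1 (i, j) + s.2.1 (i, j)))

lemma obj_rewrite {N : Type*} [Fintype N] (D pB pc : N × N → ℝ) (pe : N → ℝ)
    (u : (N × N → ℝ) × (N × N → ℝ) × (N → ℝ)) :
    objectiveA D pB pc pe u =
      ∑ e : N × N, ((u.1 e - pc e) * servedDemand D pB u.1 e - pc e * u.2.1 e
        + pe e.1 * (servedDemand D pB u.1 e + u.2.1 e)) - ∑ i, pe i * u.2.2 i := by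
  have h : ∑ e : N × N, pe e.1 * (servedDemand D pB u.1 e + u.2.1 e)
      = ∑ i, ∑ j, pe i * (servedDemand D pB u.1 (i, j) + u.2.1 (i, j)) :=
    Fintype.sum_prod_type _
  unfold objectiveA
  simp only [mul_add, mul_sub, Finset.mul_sum, Finset.sum_add_distrib,
    Finset.sum_sub_distrib] at h ⊢
  linarith [h]

/-- If in addition `D(e) > 0` on every edge, then any two maximizers of player
A's objective over the feasible set have the same price vector: the optimal
prices of player A's best-response problem are unique for any fixed `p_B`. -/
theorem bestResponse_prices_unique {N : Type*} [Fintype N] [DecidableEq N] [Nonempty N]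
    (pB : N × N → ℝ) (hpB : ∀ e, pB e ∈ Set.Icc (0:ℝ) 1)
    (MA : ℝ) (hMA : 0 ≤ MA)
    (D : N × N → ℝ) (hD : ∀ e, 0 < D e)
    (pc : N × N → ℝ) (hpc : ∀ e, 0 ≤ pc e)
    (pe : N → ℝ) (hpe : ∀ i, 0 ≤ pe i)
    (s s' : (N × N → ℝ) × (N × N → ℝ) × (N → ℝ))
    (hs : s ∈ feasibleSet D pB MA) (hs' : s' ∈ feasibleSet D pB MA)
    (hmax : ∀ t ∈ feasibleSet D pB MA, objectiveA D pB pc pe t ≤ objectiveA D pB pc pe s)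
    (hmax' : ∀ t ∈ feasibleSet D pB MA, objectiveA D pB pc pe t ≤ objectiveA D pB pc pe s') :
    s.1 = s'.1 := by
  classical
  obtain ⟨hI, hr, hm, hsup, hbal, hfleet⟩ := hs
  obtain ⟨hI', hr', hm', hsup', hbal', hfleet'⟩ := hs'
  set t : (N × N → ℝ) × (N × N → ℝ) × (N → ℝ) :=
    (fun e => (s.1 e + s'.1 e) / 2, fun e => (s.2.1 e + s'.2.1 e) / 2,
      fun i => (s.2.2 i + s'.2.2 i) / 2) with ht
  have sd_mid : ∀ e, servedDemand D pB t.1 e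
      = (servedDemand D pB s.1 e + servedDemand D pB s'.1 e) / 2 := by
    intro e; simp only [servedDemand, ht]; ring
  have hterm : ∀ i j, servedDemand D pB t.1 (i, j) + t.2.1 (i, j)
      = ((servedDemand D pB s.1 (i, j) + s.2.1 (i, j))
        + (servedDemand D pB s'.1 (i, j) + s'.2.1 (i, j))) / 2 := by
    intro i j; rw [sd_mid]; simp only [ht]; ring
  have htfeas : t ∈ feasibleSet D pB MA := by
    refine ⟨?_, ?_, ?_, ?_, ?_, ?_⟩
    · intro e
      have h1 := hI e; have h2 := hI' e
      simp only [Set.mem_Icc, ht] at *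
      constructor
      · linarith [h1.1, h2.1]
      · linarith [h1.2, h2.2]
    · intro e; have := hr e; have := hr' e; simp only [ht]; positivity
    · intro i; have := hm i; have := hm' i; simp only [ht]; positivity
    · intro i
      have hsum : ∑ j, (servedDemand D pB t.1 (i, j) + t.2.1 (i, j))
          = (∑ j, (servedDemand D pB s.1 (i, j) + s.2.1 (i, j))
            + ∑ j, (servedDemand D pB s'.1 (i, j) + s'.2.1 (i, j))) / 2 := by
        rw [Finset.sum_congr rfl (fun j _ => hterm i j)]
        rw [← Finset.sum_div, Finset.sum_add_distrib]
      rw [hsum]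
      have h1 := hsup i; have h2 := hsup' i
      simp only [ht]
      linarith
    · intro i
      have key : ∀ (v : (N × N → ℝ) × (N × N → ℝ) × (N → ℝ)) (hv : ∀ k l,
          servedDemand D pB v.1 (k, l) + v.2.1 (k, l)
          = ((servedDemand D pB s.1 (k, l) + s.2.1 (k, l))
            + (servedDemand D pB s'.1 (k, l) + s'.2.1 (k, l))) / 2) (F : N → N × N),
          ∑ j ∈ Finset.univ.filter (· ≠ i),
              (servedDemand D pB v.1 (F j) + v.2.1 (F j))
            = (∑ j ∈ Finset.univ.filter (· ≠ i),
                (servedDemand D pB s.1 (F j) + s.2.1 (F j))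
              + ∑ j ∈ Finset.univ.filter (· ≠ i),
                (servedDemand D pB s'.1 (F j) + s'.2.1 (F j))) / 2 := by
        intro v hv F
        rw [Finset.sum_congr rfl (fun j _ => hv (F j).1 (F j).2)]
        rw [← Finset.sum_div, Finset.sum_add_distrib]
      have k1 := key t hterm (fun j => (i, j))
      have k2 := key t hterm (fun j => (j, i))
      simp only at k1 k2
      rw [k1, k2, hbal i, hbal' i]
    · have : ∑ i, t.2.2 i = (∑ i, s.2.2 i + ∑ i, s'.2.2 i) / 2 := by
        simp only [ht]
        rw [← Finset.sum_div, Finset.sum_add_distrib]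
      rw [this, hfleet, hfleet']
      linarith
  -- objective comparison
  have hval : objectiveA D pB pc pe s' = objectiveA D pB pc pe s :=
    le_antisymm (hmax s' ⟨hI', hr', hm', hsup', hbal', hfleet'⟩)
      (hmax' s ⟨hI, hr, hm, hsup, hbal, hfleet⟩)
  have hkey : objectiveA D pB pc pe t
      = (objectiveA D pB pc pe s + objectiveA D pB pc pe s') / 2
        + ∑ e : N × N, D e * (1 + pB e) * (s.1 e - s'.1 e) ^ 2 / 8 := by
    rw [obj_rewrite, obj_rewrite, obj_rewrite]
    have hnode : ∑ i, pe i * t.2.2 i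
        = (∑ i, pe i * s.2.2 i + ∑ i, pe i * s'.2.2 i) / 2 := by
      have h : ∀ i, pe i * t.2.2 i = (pe i * s.2.2 i + pe i * s'.2.2 i) / 2 := by
        intro i; simp only [ht]; ring
      rw [Finset.sum_congr rfl (fun i _ => h i), ← Finset.sum_div, Finset.sum_add_distrib]
    have hedge : ∑ e : N × N, ((t.1 e - pc e) * servedDemand D pB t.1 e - pc e * t.2.1 e
          + pe e.1 * (servedDemand D pB t.1 e + t.2.1 e))
        = ∑ e : N × N, ((((s.1 e - pc e) * servedDemand D pB s.1 e - pc e * s.2.1 e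
            + pe e.1 * (servedDemand D pB s.1 e + s.2.1 e))
          + ((s'.1 e - pc e) * servedDemand D pB s'.1 e - pc e * s'.2.1 e
            + pe e.1 * (servedDemand D pB s'.1 e + s'.2.1 e))) / 2
          + D e * (1 + pB e) * (s.1 e - s'.1 e) ^ 2 / 8) := by
      refine Finset.sum_congr rfl fun e _ => ?_
      simp only [servedDemand, ht]; ring
    have hsplit : ∑ e : N × N, ((t.1 e - pc e) * servedDemand D pB t.1 e - pc e * t.2.1 e
          + pe e.1 * (servedDemand D pB t.1 e + t.2.1 e))
        = (∑ e : N × N, ((s.1 e - pc e) * servedDemand D pB s.1 e - pc e * s.2.1 e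
            + pe e.1 * (servedDemand D pB s.1 e + s.2.1 e))
          + ∑ e : N × N, ((s'.1 e - pc e) * servedDemand D pB s'.1 e - pc e * s'.2.1 e
            + pe e.1 * (servedDemand D pB s'.1 e + s'.2.1 e))) / 2
          + ∑ e : N × N, D e * (1 + pB e) * (s.1 e - s'.1 e) ^ 2 / 8 := by
      rw [hedge, Finset.sum_add_distrib, ← Finset.sum_div, Finset.sum_add_distrib]
    rw [hnode, hsplit]
    ring
  have hle : objectiveA D pB pc pe t ≤ objectiveA D pB pc pe s := hmax t htfeas
  have hQ : ∑ e : N × N, D e * (1 + pB e) * (s.1 e - s'.1 e) ^ 2 / 8 ≤ 0 := by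
    rw [hval] at hkey; linarith
  have hnn : ∀ e ∈ (Finset.univ : Finset (N × N)),
      0 ≤ D e * (1 + pB e) * (s.1 e - s'.1 e) ^ 2 / 8 := by
    intro e _
    have h1 := (hD e).le
    have h2 : (0:ℝ) ≤ 1 + pB e := by linarith [(hpB e).1]
    positivity
  have hzero : ∀ e ∈ (Finset.univ : Finset (N × N)),
      D e * (1 + pB e) * (s.1 e - s'.1 e) ^ 2 / 8 = 0 := by
    rw [← Finset.sum_eq_zero_iff_of_nonneg hnn]
    exact le_antisymm hQ (Finset.sum_nonneg hnn)
  funext e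
  have he := hzero e (Finset.mem_univ e)
  have hDp : 0 < D e * (1 + pB e) := by
    have h2 : (0:ℝ) < 1 + pB e := by linarith [(hpB e).1]
    exact mul_pos (hD e) h2
  have hsq : (s.1 e - s'.1 e) ^ 2 = 0 := by
    by_contra h
    have : 0 < (s.1 e - s'.1 e) ^ 2 := lt_of_le_of_ne (sq_nonneg _) (Ne.symm h)
    nlinarith
  have := pow_eq_zero_iff (n := 2) (by norm_num) |>.mp hsq
  linarith [sub_eq_zero.mp this]
end

section
/- Suppose the demand function is the bilinear demand f(p,q) = (1/2)(1−p)(1+q) and there exists at least one edge e₀ ∈ E with D(e₀) > 0. Then the duopoly game does not admit an exact potential function: there is no function Φ of strategy pairs such that for all strategies s_A, s_A', s_B with prices in [0,1], Φ(s_A, s_B) − Φ(s_A', s_B) = U_A(s_A, s_B) − U_A(s_A', s_B), and for all s_A, s_B, s_B' with prices in [0,1], Φ(s_A, s_B) − Φ(s_A, s_B') = U_B(s_A, s_B) − U_B(s_A, s_B'). -/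
open scoped BigOperators

/-- A strategy: prices on edges, rebalancing rates on edges, supplies at nodes. -/
abbrev Strategy (N : Type*) := (N × N → ℝ) × (N × N → ℝ) × (N → ℝ)

/-- A strategy has valid prices if every price lies in `[0,1]`. -/
def validPrices {N : Type*} (s : Strategy N) : Prop := ∀ e, s.1 e ∈ Set.Icc (0:ℝ) 1

/-- A player's utility, given demand rates `D`, transit costs `pc`, parking
costs `pe`, a demand function `f`, the player's own strategy `sA` and the
opponent's strategy `sB`: revenue minus rebalancing costs minus parking costs,
where the served demand on edge `(i,j)` is `D(i,j) · f(p_A(i,j), p_B(i,j))`. -/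
noncomputable def utility {N : Type*} [Fintype N] (D pc : N × N → ℝ) (pe : N → ℝ)
    (f : ℝ → ℝ → ℝ) (sA sB : Strategy N) : ℝ :=
  ∑ e, (sA.1 e - pc e) * (D e * f (sA.1 e) (sB.1 e)) - ∑ e, pc e * sA.2.1 e -
    ∑ i, pe i * (sA.2.2 i -
      ∑ j, (D (i, j) * f (sA.1 (i, j)) (sB.1 (i, j)) + sA.2.1 (i, j)))

/-- Under the bilinear demand `f(p,q) = (1/2)(1-p)(1+q)`, if some edge has
positive demand rate then the duopoly game admits no exact potential function. -/
theorem no_exact_potential_bilinear {N : Type*} [Fintype N] [Nonempty N]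
    (D pc : N × N → ℝ) (pe : N → ℝ) (e₀ : N × N) (hD : 0 < D e₀) :
    ¬ ∃ Φ : Strategy N → Strategy N → ℝ,
      (∀ sA sA' sB : Strategy N, validPrices sA → validPrices sA' → validPrices sB →
        Φ sA sB - Φ sA' sB =
          utility D pc pe (fun p q => (1 - p) * (1 + q) / 2) sA sB -
            utility D pc pe (fun p q => (1 - p) * (1 + q) / 2) sA' sB) ∧
      (∀ sA sB sB' : Strategy N, validPrices sA → validPrices sB → validPrices sB' →
        Φ sA sB - Φ sA sB' =
          utility D pc pe (fun p q => (1 - p) * (1 + q) / 2) sB sA -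
            utility D pc pe (fun p q => (1 - p) * (1 + q) / 2) sB' sA) := by
  rintro ⟨Φ, hA, hB⟩
  classical
  set f : ℝ → ℝ → ℝ := fun p q => (1 - p) * (1 + q) / 2 with hf
  -- the one-parameter family of strategies
  set s : ℝ → Strategy N := fun t =>
    (fun e => if e = e₀ then t else 0, fun _ => 0, fun _ => 0) with hs
  have hvalid : ∀ t : ℝ, t ∈ Set.Icc (0:ℝ) 1 → validPrices (s t) := by
    intro t ht e
    simp only [hs]
    split_ifs
    · exact ht
    · exact ⟨le_refl 0, zero_le_one⟩
  -- utility as a single sum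
  have hF : ∀ t1 t2 : ℝ, utility D pc pe f (s t1) (s t2) =
      ∑ e : N × N, ((if e = e₀ then t1 else 0) - pc e + pe e.1) *
        (D e * f (if e = e₀ then t1 else 0) (if e = e₀ then t2 else 0)) := by
    intro t1 t2
    simp only [utility, hs, mul_zero, add_zero, Finset.sum_const_zero, sub_zero, zero_sub,
      mul_neg, Finset.sum_neg_distrib, sub_neg_eq_add]
    rw [show (∑ i : N, pe i * ∑ j : N, D (i, j) *
        f (if (i, j) = e₀ then t1 else 0) (if (i, j) = e₀ then t2 else 0)) =
        ∑ e : N × N, pe e.1 * (D e * f (if e = e₀ then t1 else 0) (if e = e₀ then t2 else 0))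
        from by rw [Fintype.sum_prod_type]; simp [Finset.mul_sum]]
    rw [← Finset.sum_add_distrib]
    apply Finset.sum_congr rfl
    intro e _
    ring
  -- difference of utilities depends only on edge e₀
  set g : ℝ → ℝ → ℝ := fun t1 t2 => (t1 - pc e₀ + pe e₀.1) * (D e₀ * f t1 t2) with hg
  have hdiff : ∀ t1 t1' t2 : ℝ,
      utility D pc pe f (s t1) (s t2) - utility D pc pe f (s t1') (s t2) =
        g t1 t2 - g t1' t2 := by
    intro t1 t1' t2
    rw [hF, hF, ← Finset.sum_sub_distrib]
    rw [Finset.sum_eq_single e₀]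
    · simp [hg]
    · intro e _ he
      simp [he]
    · intro h
      exact absurd (Finset.mem_univ e₀) h
  have h0 : (0:ℝ) ∈ Set.Icc (0:ℝ) 1 := by norm_num
  have h1 : (1:ℝ) ∈ Set.Icc (0:ℝ) 1 := by norm_num
  have hhalf : (1/2:ℝ) ∈ Set.Icc (0:ℝ) 1 := by norm_num
  have e1 := hA (s 1) (s 0) (s (1/2)) (hvalid _ h1) (hvalid _ h0) (hvalid _ hhalf)
  have e2 := hA (s 1) (s 0) (s 0) (hvalid _ h1) (hvalid _ h0) (hvalid _ h0)
  have e3 := hB (s 1) (s (1/2)) (s 0) (hvalid _ h1) (hvalid _ hhalf) (hvalid _ h0)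
  have e4 := hB (s 0) (s (1/2)) (s 0) (hvalid _ h0) (hvalid _ hhalf) (hvalid _ h0)
  rw [hdiff 1 0 (1/2)] at e1
  rw [hdiff 1 0 0] at e2
  rw [hdiff (1/2) 0 1] at e3
  rw [hdiff (1/2) 0 0] at e4
  have key : (g 1 (1/2) - g 0 (1/2)) - (g 1 0 - g 0 0)
      - ((g (1/2) 1 - g 0 1) - (g (1/2) 0 - g 0 0)) = 0 := by
    linarith [e1, e2, e3, e4]
  simp only [hg, hf] at key
  nlinarith [key, hD]
end

section
/- Let D > 0 and a ∈ ℝ. Define F : ℝ × ℝ → ℝ by F(p,q) = (D/2)(1+q)(1−p)(p−a) − (D/2)(1+p)(1−q)(q−a). Then F is not additively separable: there do not exist functions χ : ℝ → ℝ and ψ : ℝ → ℝ such that F(p,q) = χ(p) + ψ(q) for all p, q ∈ [0,1]. (This is the per-edge obstruction showing that the difference U_A − U_B of the two players' utilities under the bilinear demand cannot split as a function of player A's price plus a function of player B's price, which is what the existence of an exact potential would require.) -/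
/-- The difference `F(p,q)` of the two players' per-edge profits under the
bilinear demand (with demand rate `D > 0` and margin parameter `a`) is not
additively separable on `[0,1] × [0,1]`: it cannot be written as
`χ(p) + ψ(q)`. This is the per-edge obstruction to an exact potential. -/
theorem profitDifference_not_separable (D a : ℝ) (hD : 0 < D) :
    ¬ ∃ (χ ψ : ℝ → ℝ), ∀ p ∈ Set.Icc (0:ℝ) 1, ∀ q ∈ Set.Icc (0:ℝ) 1,
      D / 2 * (1 + q) * (1 - p) * (p - a) - D / 2 * (1 + p) * (1 - q) * (q - a) =
        χ p + ψ q := by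
  rintro ⟨χ, ψ, h⟩
  have h0 : (0:ℝ) ∈ Set.Icc (0:ℝ) 1 := by norm_num
  have h1 : (1:ℝ) ∈ Set.Icc (0:ℝ) 1 := by norm_num
  have hh : (1/2 : ℝ) ∈ Set.Icc (0:ℝ) 1 := by norm_num
  have e1 := h 0 h0 0 h0
  have e2 := h 1 h1 (1/2) hh
  have e3 := h 0 h0 (1/2) hh
  have e4 := h 1 h1 0 h0
  nlinarith [e1, e2, e3, e4, hD]
end

section
/- Suppose the demand function has the form f(p,q) = g(p) + C·q for some function g : ℝ → ℝ and constant C ∈ ℝ. Define Φ(s_A, s_B) = Σ_{(i,j)∈E} D(i,j)·[p_A(i,j)·g(p_A(i,j)) + p_B(i,j)·g(p_B(i,j)) + (pe(i) − pc(i,j))·(g(p_A(i,j)) + g(p_B(i,j)))] + C·Σ_{(i,j)∈E} D(i,j)·p_A(i,j)·p_B(i,j) − Σ_{i∈N} pe(i)·(m_A(i) + m_B(i)) + Σ_{(i,j)∈E} (pe(i) − pc(i,j))·(r_A(i,j) + r_B(i,j)). Then Φ is an exact potential for the duopoly game: for all strategies s_A, s_A', s_B with prices in [0,1], Φ(s_A,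 s_B) − Φ(s_A', s_B) = U_A(s_A, s_B) − U_A(s_A', s_B), and for all s_A, s_B, s_B' with prices in [0,1], Φ(s_A, s_B) − Φ(s_A, s_B') = U_B(s_A, s_B) − U_B(s_A, s_B'). -/
open scoped BigOperators

/-- The candidate exact potential for the duopoly game with demand function
`f(p,q) = g(p) + C·q`. -/
noncomputable def potentialFn {N : Type*} [Fintype N] (D pc : N × N → ℝ) (pe : N → ℝ)
    (g : ℝ → ℝ) (C : ℝ) (sA sB : Strategy N) : ℝ :=
  ∑ e, D e * (sA.1 e * g (sA.1 e) + sB.1 e * g (sB.1 e) +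
      (pe e.1 - pc e) * (g (sA.1 e) + g (sB.1 e))) +
    C * ∑ e, D e * (sA.1 e * sB.1 e) -
    ∑ i, pe i * (sA.2.2 i + sB.2.2 i) +
    ∑ e, (pe e.1 - pc e) * (sA.2.1 e + sB.2.1 e)

private lemma utility_eq {N : Type*} [Fintype N] (D pc : N × N → ℝ) (pe : N → ℝ)
    (f : ℝ → ℝ → ℝ) (sA sB : Strategy N) :
    utility D pc pe f sA sB =
      ∑ e, ((sA.1 e - pc e + pe e.1) * (D e * f (sA.1 e) (sB.1 e)) +
        (pe e.1 - pc e) * sA.2.1 e) - ∑ i, pe i * sA.2.2 i := by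
  have h : ∑ i, pe i * (sA.2.2 i -
      ∑ j, (D (i, j) * f (sA.1 (i, j)) (sB.1 (i, j)) + sA.2.1 (i, j)))
      = ∑ i, pe i * sA.2.2 i -
        ∑ e : N × N, pe e.1 * (D e * f (sA.1 e) (sB.1 e) + sA.2.1 e) := by
    rw [Fintype.sum_prod_type, ← Finset.sum_sub_distrib]
    refine Finset.sum_congr rfl fun i _ => ?_
    rw [mul_sub, Finset.mul_sum]
  have hS : ∑ e, ((sA.1 e - pc e + pe e.1) * (D e * f (sA.1 e) (sB.1 e)) +
      (pe e.1 - pc e) * sA.2.1 e)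
      = ∑ e, ((sA.1 e - pc e) * (D e * f (sA.1 e) (sB.1 e)) - pc e * sA.2.1 e +
        pe e.1 * (D e * f (sA.1 e) (sB.1 e) + sA.2.1 e)) := by
    refine Finset.sum_congr rfl fun e _ => ?_; ring
  rw [utility, h, hS, Finset.sum_add_distrib, Finset.sum_sub_distrib]
  ring

private lemma potentialFn_eq {N : Type*} [Fintype N] (D pc : N × N → ℝ) (pe : N → ℝ)
    (g : ℝ → ℝ) (C : ℝ) (sA sB : Strategy N) :
    potentialFn D pc pe g C sA sB =
      ∑ e, (D e * (sA.1 e * g (sA.1 e) + sB.1 e * g (sB.1 e) +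
          (pe e.1 - pc e) * (g (sA.1 e) + g (sB.1 e))) +
        C * (D e * (sA.1 e * sB.1 e)) +
        (pe e.1 - pc e) * (sA.2.1 e + sB.2.1 e)) -
      ∑ i, pe i * (sA.2.2 i + sB.2.2 i) := by
  rw [potentialFn, Finset.mul_sum, ← Finset.sum_add_distrib, sub_add_eq_add_sub,
    ← Finset.sum_add_distrib]

/-- If the demand function has the form `f(p,q) = g(p) + C·q`, then `potentialFn`
is an exact potential for the duopoly game. -/
theorem potentialFn_is_exact_potential {N : Type*} [Fintype N] [Nonempty N]
    (D pc : N × N → ℝ) (pe : N → ℝ) (g : ℝ → ℝ) (C : ℝ) :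
    (∀ sA sA' sB : Strategy N, validPrices sA → validPrices sA' → validPrices sB →
      potentialFn D pc pe g C sA sB - potentialFn D pc pe g C sA' sB =
        utility D pc pe (fun p q => g p + C * q) sA sB -
          utility D pc pe (fun p q => g p + C * q) sA' sB) ∧
    (∀ sA sB sB' : Strategy N, validPrices sA → validPrices sB → validPrices sB' →
      potentialFn D pc pe g C sA sB - potentialFn D pc pe g C sA sB' =
        utility D pc pe (fun p q => g p + C * q) sB sA -
          utility D pc pe (fun p q => g p + C * q) sB' sA) := by
  constructor
  · intro sA sA' sB _ _ _
    rw [potentialFn_eq, potentialFn_eq, utility_eq, utility_eq]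
    have h1 : ∀ z z' w : Strategy N,
        (∑ e, (D e * (z.1 e * g (z.1 e) + w.1 e * g (w.1 e) +
            (pe e.1 - pc e) * (g (z.1 e) + g (w.1 e))) +
          C * (D e * (z.1 e * w.1 e)) + (pe e.1 - pc e) * (z.2.1 e + w.2.1 e))) -
        (∑ e, (D e * (z'.1 e * g (z'.1 e) + w.1 e * g (w.1 e) +
            (pe e.1 - pc e) * (g (z'.1 e) + g (w.1 e))) +
          C * (D e * (z'.1 e * w.1 e)) + (pe e.1 - pc e) * (z'.2.1 e + w.2.1 e))) =
        (∑ e, ((z.1 e - pc e + pe e.1) * (D e * (g (z.1 e) + C * w.1 e)) +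
          (pe e.1 - pc e) * z.2.1 e)) -
        (∑ e, ((z'.1 e - pc e + pe e.1) * (D e * (g (z'.1 e) + C * w.1 e)) +
          (pe e.1 - pc e) * z'.2.1 e)) := by
      intro z z' w
      rw [← Finset.sum_sub_distrib, ← Finset.sum_sub_distrib]
      refine Finset.sum_congr rfl fun e _ => ?_; ring
    have h2 : ∀ z z' w : Strategy N,
        (∑ i, pe i * (z.2.2 i + w.2.2 i)) - (∑ i, pe i * (z'.2.2 i + w.2.2 i)) =
        (∑ i, pe i * z.2.2 i) - (∑ i, pe i * z'.2.2 i) := by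
      intro z z' w
      rw [← Finset.sum_sub_distrib, ← Finset.sum_sub_distrib]
      refine Finset.sum_congr rfl fun i _ => ?_; ring
    have := h1 sA sA' sB; have := h2 sA sA' sB; linarith
  · intro sA sB sB' _ _ _
    rw [potentialFn_eq, potentialFn_eq, utility_eq, utility_eq]
    have h1 : ∀ z z' w : Strategy N,
        (∑ e, (D e * (z.1 e * g (z.1 e) + w.1 e * g (w.1 e) +
            (pe e.1 - pc e) * (g (z.1 e) + g (w.1 e))) +
          C * (D e * (z.1 e * w.1 e)) + (pe e.1 - pc e) * (z.2.1 e + w.2.1 e))) -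
        (∑ e, (D e * (z'.1 e * g (z'.1 e) + w.1 e * g (w.1 e) +
            (pe e.1 - pc e) * (g (z'.1 e) + g (w.1 e))) +
          C * (D e * (z'.1 e * w.1 e)) + (pe e.1 - pc e) * (z'.2.1 e + w.2.1 e))) =
        (∑ e, ((z.1 e - pc e + pe e.1) * (D e * (g (z.1 e) + C * w.1 e)) +
          (pe e.1 - pc e) * z.2.1 e)) -
        (∑ e, ((z'.1 e - pc e + pe e.1) * (D e * (g (z'.1 e) + C * w.1 e)) +
          (pe e.1 - pc e) * z'.2.1 e)) := by
      intro z z' w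
      rw [← Finset.sum_sub_distrib, ← Finset.sum_sub_distrib]
      refine Finset.sum_congr rfl fun e _ => ?_; ring
    have h2 : ∀ z z' w : Strategy N,
        (∑ i, pe i * (z.2.2 i + w.2.2 i)) - (∑ i, pe i * (z'.2.2 i + w.2.2 i)) =
        (∑ i, pe i * z.2.2 i) - (∑ i, pe i * z'.2.2 i) := by
      intro z z' w
      rw [← Finset.sum_sub_distrib, ← Finset.sum_sub_distrib]
      refine Finset.sum_congr rfl fun i _ => ?_; ring
    have h3 : ∀ z z' w : Strategy N,
        (∑ e, (D e * (w.1 e * g (w.1 e) + z.1 e * g (z.1 e) +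
            (pe e.1 - pc e) * (g (w.1 e) + g (z.1 e))) +
          C * (D e * (w.1 e * z.1 e)) + (pe e.1 - pc e) * (w.2.1 e + z.2.1 e))) =
        (∑ e, (D e * (z.1 e * g (z.1 e) + w.1 e * g (w.1 e) +
            (pe e.1 - pc e) * (g (z.1 e) + g (w.1 e))) +
          C * (D e * (z.1 e * w.1 e)) + (pe e.1 - pc e) * (z.2.1 e + w.2.1 e))) := by
      intro z z' w
      refine Finset.sum_congr rfl fun e _ => ?_; ring
    have h4 : ∀ z w : Strategy N,
        (∑ i, pe i * (w.2.2 i + z.2.2 i)) = (∑ i, pe i * (z.2.2 i + w.2.2 i)) := by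
      intro z w
      refine Finset.sum_congr rfl fun i _ => ?_; ring
    have := h1 sB sB' sA; have := h2 sB sB' sA
    have := h3 sB sB' sA; have := h3 sB' sB' sA
    have := h4 sB sA; have := h4 sB' sA
    linarith
end

section
/- Suppose the demand function has the additively separable form f(p,q) = g(p) + h(q) for functions g, h : ℝ → ℝ, and suppose there exists an edge e₀ ∈ E with D(e₀) > 0. If the duopoly game admits an exact potential function Φ (i.e., for all strategies s_A, s_A', s_B with prices in [0,1], Φ(s_A, s_B) − Φ(s_A', s_B) = U_A(s_A, s_B) − U_A(s_A', s_B), and for all s_A, s_B, s_B' with prices in [0,1], Φ(s_A, s_B) − Φ(s_A, s_B') = U_B(s_A, s_B) − U_B(s_A, s_B')), then h is affine on [0,1]: there exists C ∈ ℝ such that h(q) = C·q + h(0) for all q ∈ [0,1]. Moreover, if in addition h is non-decreasing and non-constant on [0,1], then C > 0. -/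
open scoped BigOperators

open Classical

noncomputable def Sstrat {N : Type*} (e₀ : N × N) (p : ℝ) : Strategy N :=
  (fun e => if e = e₀ then p else 0, fun _ => 0, fun _ => 0)

lemma Sstrat_valid {N : Type*} (e₀ : N × N) {p : ℝ} (hp : p ∈ Set.Icc (0:ℝ) 1) :
    validPrices (Sstrat e₀ p) := by
  intro e
  simp only [Sstrat]
  split
  · exact hp
  · exact ⟨le_refl 0, zero_le_one⟩

lemma utility_Sstrat {N : Type*} [Fintype N] (D pc : N × N → ℝ) (pe : N → ℝ)
    (g h : ℝ → ℝ) (e₀ : N × N) (p q : ℝ) :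
    utility D pc pe (fun p q => g p + h q) (Sstrat e₀ p) (Sstrat e₀ q) =
      ∑ e : N × N, ((if e = e₀ then p else 0) - pc e + pe e.1) *
        (D e * (g (if e = e₀ then p else 0) + h (if e = e₀ then q else 0))) := by
  unfold utility Sstrat
  simp only [mul_zero, Finset.sum_const_zero, add_zero, zero_sub, mul_neg, sub_zero]
  rw [Fintype.sum_prod_type (f := fun e : N × N => ((if e = e₀ then p else 0) - pc e + pe e.1) *
        (D e * (g (if e = e₀ then p else 0) + h (if e = e₀ then q else 0)))),
      Fintype.sum_prod_type (f := fun e : N × N => ((if e = e₀ then p else 0) - pc e) *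
        (D e * (g (if e = e₀ then p else 0) + h (if e = e₀ then q else 0))))]
  rw [← Finset.sum_sub_distrib]
  refine Finset.sum_congr rfl fun x _ => ?_
  rw [sub_neg_eq_add, Finset.mul_sum, ← Finset.sum_add_distrib]
  refine Finset.sum_congr rfl fun y _ => ?_
  ring

lemma Wdiff {N : Type*} [Fintype N] (D pc : N × N → ℝ) (pe : N → ℝ)
    (g h : ℝ → ℝ) (e₀ : N × N) (p p' q : ℝ) :
    utility D pc pe (fun p q => g p + h q) (Sstrat e₀ p) (Sstrat e₀ q) -
      utility D pc pe (fun p q => g p + h q) (Sstrat e₀ p') (Sstrat e₀ q) =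
      D e₀ * ((p - pc e₀ + pe e₀.1) * (g p + h q) - (p' - pc e₀ + pe e₀.1) * (g p' + h q)) := by
  rw [utility_Sstrat, utility_Sstrat, ← Finset.sum_sub_distrib]
  rw [Finset.sum_eq_single e₀]
  · simp only [eq_self_iff_true, if_true]; ring
  · intro e _ he
    simp [if_neg he]
  · intro habs
    exact absurd (Finset.mem_univ e₀) habs


/-- Suppose the demand function is additively separable, `f(p,q) = g(p) + h(q)`,
and some edge has positive demand rate. If the duopoly game admits an exact
potential function, then `h` is affine on `[0,1]`: `h(q) = C·q + h(0)` for some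
constant `C`. Moreover, if `h` is non-decreasing and non-constant on `[0,1]`,
then `C > 0`. -/
theorem separable_demand_potential_forces_affine {N : Type*} [Fintype N] [Nonempty N]
    (D pc : N × N → ℝ) (pe : N → ℝ) (g h : ℝ → ℝ)
    (e₀ : N × N) (hD : 0 < D e₀)
    (Φ : Strategy N → Strategy N → ℝ)
    (hΦA : ∀ sA sA' sB : Strategy N, validPrices sA → validPrices sA' → validPrices sB →
      Φ sA sB - Φ sA' sB =
        utility D pc pe (fun p q => g p + h q) sA sB -
          utility D pc pe (fun p q => g p + h q) sA' sB)
    (hΦB : ∀ sA sB sB' : Strategy N, validPrices sA → validPrices sB → validPrices sB' →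
      Φ sA sB - Φ sA sB' =
        utility D pc pe (fun p q => g p + h q) sB sA -
          utility D pc pe (fun p q => g p + h q) sB' sA) :
    ∃ C : ℝ, (∀ q ∈ Set.Icc (0:ℝ) 1, h q = C * q + h 0) ∧
      (MonotoneOn h (Set.Icc (0:ℝ) 1) →
        (∃ q ∈ Set.Icc (0:ℝ) 1, ∃ q' ∈ Set.Icc (0:ℝ) 1, h q ≠ h q') →
        0 < C) := by
  have h0 : (0:ℝ) ∈ Set.Icc (0:ℝ) 1 := ⟨le_refl 0, zero_le_one⟩
  have h1 : (1:ℝ) ∈ Set.Icc (0:ℝ) 1 := ⟨zero_le_one, le_refl 1⟩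
  have cyc : ∀ p ∈ Set.Icc (0:ℝ) 1, ∀ p' ∈ Set.Icc (0:ℝ) 1, ∀ q ∈ Set.Icc (0:ℝ) 1,
      ∀ q' ∈ Set.Icc (0:ℝ) 1,
      (p - p') * (h q - h q') = (q - q') * (h p - h p') := by
    intro p hp p' hp' q hq q' hq'
    have vp := Sstrat_valid e₀ hp
    have vp' := Sstrat_valid e₀ hp'
    have vq := Sstrat_valid e₀ hq
    have vq' := Sstrat_valid e₀ hq'
    have e1 := hΦA (Sstrat e₀ p) (Sstrat e₀ p') (Sstrat e₀ q) vp vp' vq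
    have e2 := hΦA (Sstrat e₀ p) (Sstrat e₀ p') (Sstrat e₀ q') vp vp' vq'
    have e3 := hΦB (Sstrat e₀ p) (Sstrat e₀ q) (Sstrat e₀ q') vp vq vq'
    have e4 := hΦB (Sstrat e₀ p') (Sstrat e₀ q) (Sstrat e₀ q') vp' vq vq'
    rw [Wdiff D pc pe g h e₀] at e1 e2
    rw [Wdiff D pc pe g h e₀] at e3 e4
    have E : D e₀ * ((p - p') * (h q - h q')) = D e₀ * ((q - q') * (h p - h p')) := by
      linear_combination e2 - e1 + e3 - e4
    exact mul_left_cancel₀ (ne_of_gt hD) E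
  refine ⟨h 1 - h 0, ?_, ?_⟩
  · intro q hq
    have := cyc 1 h1 0 h0 q hq 0 h0
    linarith [this]
  · intro hmono ⟨q, hq, q', hq', hne⟩
    have hC0 : 0 ≤ h 1 - h 0 := sub_nonneg.2 (hmono h0 h1 zero_le_one)
    rcases hC0.lt_or_eq with hlt | heq
    · exact hlt
    · exfalso
      apply hne
      have hq1 := cyc 1 h1 0 h0 q hq 0 h0
      have hq2 := cyc 1 h1 0 h0 q' hq' 0 h0
      rw [← heq, mul_zero] at hq1 hq2
      linarith
end
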